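/- arXiv:1510.07924 — 5 statements merged into one kernel-verified Lean document; each statement's English description precedes it below -/
import Mathlib

section
/- Let 0 < a < b < ∞, let A(a,b) = {z ∈ ℂ : a < |z| < b}, and let d_{ab}(w) = min{b − |w|, |w| − a} for w ∈ A(a,b). Then lim_{n→+∞} [ n² ∫_{A(a,b)} (d_{ab}(w))² |w|^{2n} dV(w) ] / [ ∫_{A(a,b)} |w|^{2n} dV(w) ] = b²/2, where the limit is taken over positive integers n and dV denotes Lebesgue area measure on ℂ. -/
/-!
Integrating in polar coordinates turns both integrals into one-dimensional moments
`∫ₐᵇ f(r) r^m dr` with `m = 2n + 1`, and the denominator is explicit. As `m → ∞` the weight `r^m`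
concentrates at the outer radius, where `d_{ab}(r) = b - r`; so the numerator is squeezed between
the beta integral `∫₀ᵇ (b - r)² r^m dr = 2 b^{m+3} / ((m+1)(m+2)(m+3))` and the same integral minus
the bound `b² ((a+b)/2)^{m+1}/(m+1)` for its part over `[0, (a+b)/2]`, which is exponentially
smaller. After normalising by `b^{m+1}/(m+1)`, both bounds, multiplied by `n²`, tend to `b²/2`.
-/

open MeasureTheory Real Set Filter Topology

section Radial

variable {E : Type*} [NormedAddCommGroup E] [NormedSpace ℝ E]

theorem Complex.integral_fun_norm (f : ℝ → E) :
    ∫ z : ℂ, f ‖z‖ = (2 * π) • ∫ r in Ioi (0 : ℝ), r • f r := by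
  have h := integral_fun_norm_addHaar (volume : Measure ℂ) f
  simp only [Complex.finrank_real_complex, measureReal_def, Complex.volume_ball] at h
  rw [h, mul_smul, ← ofNat_smul_eq_nsmul ℝ]
  simp

theorem integral_annulus_fun_norm {a b : ℝ} (ha : 0 ≤ a) (hab : a ≤ b) (g : ℝ → E) :
    ∫ w in {z : ℂ | a < ‖z‖ ∧ ‖z‖ < b}, g ‖w‖ = (2 * π) • ∫ r in a..b, r • g r := by
  have hA : MeasurableSet {z : ℂ | a < ‖z‖ ∧ ‖z‖ < b} :=
    measurableSet_Ioo.preimage continuous_norm.measurable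
  have hpos : Ioo a b ⊆ Ioi 0 := fun r hr => ha.trans_lt hr.1
  have h := Complex.integral_fun_norm ((Ioo a b).indicator g)
  simp only [← indicator_smul_apply _ (fun r : ℝ => r), setIntegral_indicator measurableSet_Ioo,
    inter_eq_right.2 hpos, ← integral_Ioc_eq_integral_Ioo, ← intervalIntegral.integral_of_le hab]
    at h
  rw [← h, ← integral_indicator hA]
  rfl

end Radial

theorem integral_sub_sq_mul_pow (b : ℝ) (m : ℕ) :
    ∫ r in (0 : ℝ)..b, (b - r) ^ 2 * r ^ m
      = 2 * b ^ (m + 3) / ((m + 1) * (m + 2) * (m + 3)) := by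
  have hexpand : ∀ r : ℝ, (b - r) ^ 2 * r ^ m
      = b ^ 2 * r ^ m - 2 * b * r ^ (m + 1) + r ^ (m + 2) := fun r => by ring
  simp only [hexpand]
  rw [intervalIntegral.integral_add, intervalIntegral.integral_sub,
    intervalIntegral.integral_const_mul, intervalIntegral.integral_const_mul, integral_pow,
    integral_pow, integral_pow]
  · push_cast
    field_simp
    ring
  all_goals exact Continuous.intervalIntegrable (by fun_prop) _ _

theorem integral_pow_eq_mul_one_sub_div_pow {a b : ℝ} (hb : b ≠ 0) (m : ℕ) :
    ∫ r in a..b, r ^ m = b ^ (m + 1) / (m + 1) * (1 - (a / b) ^ (m + 1)) := by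
  rw [integral_pow, div_pow]
  field_simp

section DistanceMoment

variable {a b : ℝ} (m : ℕ)

theorem integral_min_sq_mul_pow_le (ha : 0 ≤ a) (hab : a ≤ b) :
    ∫ r in a..b, min (b - r) (r - a) ^ 2 * r ^ m ≤ ∫ r in (0 : ℝ)..b, (b - r) ^ 2 * r ^ m :=
  calc ∫ r in a..b, min (b - r) (r - a) ^ 2 * r ^ m
      ≤ ∫ r in a..b, (b - r) ^ 2 * r ^ m := by
        refine intervalIntegral.integral_mono_on hab
          (Continuous.intervalIntegrable (by fun_prop) _ _)
          (Continuous.intervalIntegrable (by fun_prop) _ _) fun r hr => ?_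
        have hr0 : 0 ≤ r := ha.trans hr.1
        have hmin : 0 ≤ min (b - r) (r - a) := le_min (by linarith [hr.2]) (by linarith [hr.1])
        gcongr
        exact min_le_left _ _
    _ ≤ ∫ r in (0 : ℝ)..b, (b - r) ^ 2 * r ^ m := by
        refine intervalIntegral.integral_mono_interval ha hab le_rfl ?_
          (Continuous.intervalIntegrable (by fun_prop) _ _)
        filter_upwards [ae_restrict_mem measurableSet_Ioc] with r hr
        have hr0 : 0 ≤ r := hr.1.le
        positivity

/-- On `[(a+b)/2, b]` the distance to the boundary is `b - r`; the rest of the beta integral is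
at most `∫₀^{(a+b)/2} b² r^m dr`. -/
theorem integral_sub_sq_mul_pow_sub_le (ha : 0 ≤ a) (hab : a ≤ b) :
    (∫ r in (0 : ℝ)..b, (b - r) ^ 2 * r ^ m) - b ^ 2 * ((a + b) / 2) ^ (m + 1) / (m + 1)
      ≤ ∫ r in a..b, min (b - r) (r - a) ^ 2 * r ^ m := by
  set c := (a + b) / 2 with hc
  have hac : a ≤ c := by rw [hc]; linarith
  have hcb : c ≤ b := by rw [hc]; linarith
  have hint : ∀ x y : ℝ, IntervalIntegrable (fun r => (b - r) ^ 2 * r ^ m) volume x y :=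
    fun x y => Continuous.intervalIntegrable (by fun_prop) x y
  have hhead : ∫ r in (0 : ℝ)..c, (b - r) ^ 2 * r ^ m ≤ b ^ 2 * c ^ (m + 1) / (m + 1) :=
    calc ∫ r in (0 : ℝ)..c, (b - r) ^ 2 * r ^ m
        ≤ ∫ r in (0 : ℝ)..c, b ^ 2 * r ^ m := by
          refine intervalIntegral.integral_mono_on (ha.trans hac) (hint _ _)
            (Continuous.intervalIntegrable (by fun_prop) _ _) fun r hr => ?_
          have hr0 : 0 ≤ r := hr.1
          gcongr
          · linarith [hr.2]
          · linarith
      _ = b ^ 2 * c ^ (m + 1) / (m + 1) := by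
          simp [integral_pow, mul_div_assoc]
  have htail : ∫ r in c..b, (b - r) ^ 2 * r ^ m
      ≤ ∫ r in a..b, min (b - r) (r - a) ^ 2 * r ^ m :=
    calc ∫ r in c..b, (b - r) ^ 2 * r ^ m
        = ∫ r in c..b, min (b - r) (r - a) ^ 2 * r ^ m := by
          refine intervalIntegral.integral_congr fun r hr => ?_
          rw [uIcc_of_le hcb] at hr
          rw [min_eq_left (by linarith [hr.1, hc])]
      _ ≤ ∫ r in a..b, min (b - r) (r - a) ^ 2 * r ^ m := by
          refine intervalIntegral.integral_mono_interval hac hcb le_rfl ?_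
            (Continuous.intervalIntegrable (by fun_prop) _ _)
          filter_upwards [ae_restrict_mem measurableSet_Ioc] with r hr
          have hr0 : 0 ≤ r := ha.trans hr.1.le
          positivity
  rw [← intervalIntegral.integral_add_adjacent_intervals (hint 0 c) (hint c b)]
  linarith

/-- With `c = b²` and `q = a/b`, this bounds the normalised moment ratio from above for `s = 0`
and from below for `s = (a+b)/(2b)`. -/
noncomputable def momentRatioBound (c s q : ℝ) (m : ℕ) : ℝ :=
  (2 * c / ((m + 2) * (m + 3)) - c * s ^ (m + 1)) / (1 - q ^ (m + 1))

theorem integral_min_sq_mul_pow_div_integral_pow_le (ha : 0 ≤ a) (hab : a < b) :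
    (∫ r in a..b, min (b - r) (r - a) ^ 2 * r ^ m) / ∫ r in a..b, r ^ m
      ≤ momentRatioBound (b ^ 2) 0 (a / b) m := by
  have hb : 0 < b := ha.trans_lt hab
  have hκ : 0 < b ^ (m + 1) / (m + 1) := by positivity
  have hQ : 0 < 1 - (a / b) ^ (m + 1) :=
    sub_pos.2 (pow_lt_one₀ (by positivity) ((div_lt_one hb).2 hab) m.succ_ne_zero)
  have hN := integral_min_sq_mul_pow_le m ha hab.le
  rw [integral_sub_sq_mul_pow] at hN
  rw [momentRatioBound, integral_pow_eq_mul_one_sub_div_pow hb.ne', ← div_div (∫ r in a..b, _),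
    div_le_div_iff_of_pos_right hQ, div_le_iff₀ hκ]
  refine hN.trans_eq ?_
  field_simp
  ring

theorem le_integral_min_sq_mul_pow_div_integral_pow (ha : 0 ≤ a) (hab : a < b) :
    momentRatioBound (b ^ 2) ((a + b) / 2 / b) (a / b) m
      ≤ (∫ r in a..b, min (b - r) (r - a) ^ 2 * r ^ m) / ∫ r in a..b, r ^ m := by
  have hb : 0 < b := ha.trans_lt hab
  have hκ : 0 < b ^ (m + 1) / (m + 1) := by positivity
  have hQ : 0 < 1 - (a / b) ^ (m + 1) :=
    sub_pos.2 (pow_lt_one₀ (by positivity) ((div_lt_one hb).2 hab) m.succ_ne_zero)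
  have hN := integral_sub_sq_mul_pow_sub_le m ha hab.le
  rw [integral_sub_sq_mul_pow] at hN
  rw [momentRatioBound, integral_pow_eq_mul_one_sub_div_pow hb.ne', ← div_div (∫ r in a..b, _),
    div_le_div_iff_of_pos_right hQ, le_div_iff₀ hκ]
  refine hN.trans_eq' ?_
  rw [div_pow ((a + b) / 2)]
  field_simp
  ring

end DistanceMoment

theorem tendsto_sq_mul_momentRatioBound {q s : ℝ} (hq : |q| < 1) (hs : |s| < 1) (c : ℝ) :
    Tendsto (fun n : ℕ => (n : ℝ) ^ 2 * momentRatioBound c s q (2 * n + 1)) atTop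
      (𝓝 (c / 2)) := by
  have hmain : Tendsto (fun n : ℕ => (n : ℝ) ^ 2 * (2 * c / ((2 * n + 3) * (2 * n + 4))))
      atTop (𝓝 (c / 2)) := by
    have h := ((tendsto_natCast_div_add_atTop (3 / 2 : ℝ)).mul
      (tendsto_natCast_div_add_atTop (2 : ℝ))).const_mul (c / 2)
    rw [mul_one, mul_one] at h
    refine h.congr fun n => ?_
    field_simp
    ring
  have herr : Tendsto (fun n : ℕ => (n : ℝ) ^ 2 * (c * s ^ (2 * n + 2))) atTop (𝓝 0) := by
    have hs2 : |s ^ 2| < 1 := by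
      rw [abs_pow]
      exact pow_lt_one₀ (abs_nonneg s) hs two_ne_zero
    have h := (tendsto_pow_const_mul_const_pow_of_abs_lt_one 2 hs2).const_mul (c * s ^ 2)
    rw [mul_zero] at h
    refine h.congr fun n => ?_
    ring
  have hgeom : Tendsto (fun n : ℕ => q ^ (2 * n + 2)) atTop (𝓝 0) :=
    (tendsto_pow_atTop_nhds_zero_of_abs_lt_one hq).comp
      (tendsto_atTop_mono (fun n => show n ≤ 2 * n + 2 by omega) tendsto_id)
  have h := (hmain.sub herr).div (tendsto_const_nhds.sub hgeom) (by norm_num : (1 : ℝ) - 0 ≠ 0)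
  rw [sub_zero, sub_zero, div_one] at h
  refine h.congr fun n => ?_
  simp only [Pi.div_apply, momentRatioBound]
  push_cast
  ring

/-- For `0 < a < b`,
`lim_{n→∞} n² ∫_{A(a,b)} (d_{ab}(w))² |w|^{2n} dV / ∫_{A(a,b)} |w|^{2n} dV = b²/2`,
the limit being over positive integers `n`. -/
theorem annulus_distance_weighted_ratio_limit (a b : ℝ) (ha : 0 < a) (hab : a < b) :
    Filter.Tendsto
      (fun n : ℕ =>
        ((n : ℝ) ^ 2 *
            ∫ w in {z : ℂ | a < ‖z‖ ∧ ‖z‖ < b},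
              (min (b - ‖w‖) (‖w‖ - a)) ^ 2 * ‖w‖ ^ (2 * n)) /
          ∫ w in {z : ℂ | a < ‖z‖ ∧ ‖z‖ < b}, ‖w‖ ^ (2 * n))
      Filter.atTop (nhds (b ^ 2 / 2)) := by
  have hb : 0 < b := ha.trans hab
  have hq : |a / b| < 1 := by
    rw [abs_of_pos (by positivity)]
    exact (div_lt_one hb).2 hab
  have hs : |(a + b) / 2 / b| < 1 := by
    rw [abs_of_pos (by positivity)]
    exact (div_lt_one hb).2 (by linarith)
  have hpolar : ∀ n : ℕ,
      (n : ℝ) ^ 2 * ((∫ r in a..b, min (b - r) (r - a) ^ 2 * r ^ (2 * n + 1)) /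
        ∫ r in a..b, r ^ (2 * n + 1))
      = ((n : ℝ) ^ 2 * ∫ w in {z : ℂ | a < ‖z‖ ∧ ‖z‖ < b},
          (min (b - ‖w‖) (‖w‖ - a)) ^ 2 * ‖w‖ ^ (2 * n)) /
        ∫ w in {z : ℂ | a < ‖z‖ ∧ ‖z‖ < b}, ‖w‖ ^ (2 * n) := fun n => by
    rw [integral_annulus_fun_norm ha.le hab.le (fun r => min (b - r) (r - a) ^ 2 * r ^ (2 * n)),
      integral_annulus_fun_norm ha.le hab.le (fun r => r ^ (2 * n))]
    simp only [smul_eq_mul, mul_left_comm _ (min _ _ ^ 2), ← pow_succ']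
    field_simp
  refine (tendsto_of_tendsto_of_tendsto_of_le_of_le (tendsto_sq_mul_momentRatioBound hq hs _)
    (tendsto_sq_mul_momentRatioBound (s := 0) hq (by simp) _) (fun n => ?_) (fun n => ?_)).congr hpolar
  · exact mul_le_mul_of_nonneg_left
      (le_integral_min_sq_mul_pow_div_integral_pow _ ha.le hab) (sq_nonneg _)
  · exact mul_le_mul_of_nonneg_left
      (integral_min_sq_mul_pow_div_integral_pow_le _ ha.le hab) (sq_nonneg _)
end

section
/- Let D ⊆ ℂ be a nonempty open set, let φ₁, φ₂ : D → ℝ with 0 < φ₁(z) < φ₂(z) for all z ∈ D, and suppose the Hartogs domain Ω = {(z,w) ∈ ℂ² : z ∈ D and φ₁(z) < |w| < φ₂(z)} is bounded. Let d_Ω(z,w) denote the Euclidean distance from (z,w) to the boundary of Ω. Then there exists C > 0 such that for every nonzero integer n and every measurable g : D → ℂ, ∫_Ω (d_Ω(z,w))² |g(z)|² |w|^{2n} dV(z,w) ≤ (C/n²) ∫_Ω |g(z)|² |w|^{2n} dV(z,w), whenever the right-hand side is finite. (Here dV is Lebesgue measure on ℂ² ≅ ℝ⁴.) -/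
open MeasureTheory

/-- The Euclidean distance (on `ℂ² ≅ ℝ⁴`) from a point `p` to the boundary of a set
`Ω ⊆ ℂ × ℂ`. -/
noncomputable def euclDistToBoundary (Ω : Set (ℂ × ℂ)) (p : ℂ × ℂ) : ℝ :=
  sInf ((fun q : ℂ × ℂ =>
    Real.sqrt (‖p.1 - q.1‖ ^ 2 + ‖p.2 - q.2‖ ^ 2)) '' frontier Ω)

/-!
For `(z, w) ∈ Ω` the two points `(z, φᵢ(z) w / |w|)` lie on `∂Ω`, so
`d_Ω(z, w) ≤ δ(|w|) := min (|w| - φ₁ z) (φ₂ z - |w|)`. By Tonelli and polar coordinates in `w`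
everything reduces to the one-variable inequality
`∫_a^b δ(r)² r^(2n+1) dr ≤ (2 b² / n²) ∫_a^b r^(2n+1) dr`.
For it, bound `δ(r) ≤ b |log r - log c|` with `c` the endpoint towards which the weight grows, and
use that `r^N ((log r - log c)² / N - 2 (log r - log c) / N²)` is a primitive of
`((log r - log c)² - 2 / N²) r^(N-1)`, whose boundary terms have the right sign.

`Ω` need not be measurable; it is replaced by a measurable hull inside `closure Ω`, which adds
only boundary points, where `d_Ω` vanishes.
-/

open Set Real

section OneVariable

variable {a b : ℝ}

theorem sub_le_mul_log_sub_log {x y : ℝ} (hx : 0 < x) (hy : 0 < y) :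
    y - x ≤ y * (log y - log x) := by
  have h := one_sub_inv_le_log_of_pos (div_pos hy hx)
  rw [inv_div, log_div hy.ne' hx.ne'] at h
  have := mul_le_mul_of_nonneg_left h hy.le
  rwa [mul_sub, mul_one, mul_div_cancel₀ _ hy.ne'] at this

theorem hasDerivAt_zpow_mul_quadratic_log_sub {N : ℤ} (hN : N ≠ 0) (c : ℝ) {r : ℝ}
    (hr : 0 < r) :
    HasDerivAt (fun r => r ^ N * ((log r - log c) ^ 2 / N - 2 * (log r - log c) / N ^ 2))
      ((log r - log c) ^ 2 * r ^ (N - 1) - 2 / N ^ 2 * r ^ (N - 1)) r := by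
  have hL : HasDerivAt (fun r => log r - log c) r⁻¹ r := (hasDerivAt_log hr.ne').sub_const _
  have hG :=
    ((hL.fun_pow 2).div_const (N : ℝ)).fun_sub ((hL.const_mul 2).div_const ((N : ℝ) ^ 2))
  refine ((hasDerivAt_zpow N r (Or.inl hr.ne')).mul hG).congr_deriv ?_
  have hN' : (N : ℝ) ≠ 0 := Int.cast_ne_zero.2 hN
  rw [show r ^ N = r ^ (N - 1) * r by rw [← zpow_add_one₀ hr.ne', sub_add_cancel]]
  field_simp
  ring

theorem intervalIntegrable_zpow_of_pos (N : ℤ) (ha : 0 < a) (hab : a ≤ b) :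
    IntervalIntegrable (fun r : ℝ => r ^ N) volume a b :=
  intervalIntegral.intervalIntegrable_zpow (Or.inr fun h => by
    rw [uIcc_of_le hab] at h; exact ha.not_ge h.1)

theorem intervalIntegrable_log_sub_sq_mul_zpow (N : ℤ) (c : ℝ) (ha : 0 < a) (hab : a ≤ b) :
    IntervalIntegrable (fun r => (log r - log c) ^ 2 * r ^ N) volume a b := by
  refine ContinuousOn.intervalIntegrable fun r hr => ?_
  rw [uIcc_of_le hab] at hr
  have hr0 : r ≠ 0 := (ha.trans_le hr.1).ne'
  exact ((((continuousAt_log hr0).sub continuousAt_const).pow 2).mul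
    (continuousAt_zpow₀ r N (Or.inl hr0))).continuousWithinAt

theorem integral_log_sub_sq_mul_zpow_sub_eq {N : ℤ} (hN : N ≠ 0) (c : ℝ) (ha : 0 < a)
    (hab : a ≤ b) :
    (∫ r in a..b, (log r - log c) ^ 2 * r ^ (N - 1)) - 2 / N ^ 2 * ∫ r in a..b, r ^ (N - 1) =
      b ^ N * ((log b - log c) ^ 2 / N - 2 * (log b - log c) / N ^ 2)
        - a ^ N * ((log a - log c) ^ 2 / N - 2 * (log a - log c) / N ^ 2) := by
  have hI := intervalIntegrable_log_sub_sq_mul_zpow (N - 1) c ha hab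
  have hJ := (intervalIntegrable_zpow_of_pos (N - 1) ha hab).const_mul (2 / (N : ℝ) ^ 2)
  have hFTC := intervalIntegral.integral_eq_sub_of_hasDerivAt
    (fun r hr => hasDerivAt_zpow_mul_quadratic_log_sub hN c ?_) (hI.sub hJ)
  · rwa [intervalIntegral.integral_sub hI hJ, intervalIntegral.integral_const_mul] at hFTC
  · rw [uIcc_of_le hab] at hr
    exact ha.trans_le hr.1

theorem exists_endpoint_integral_log_sub_sq_mul_zpow_le {N : ℤ} (hN : N ≠ 0) (ha : 0 < a)
    (hab : a ≤ b) : ∃ c, (c = a ∨ c = b) ∧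
      ∫ r in a..b, (log r - log c) ^ 2 * r ^ (N - 1) ≤ 2 / N ^ 2 * ∫ r in a..b, r ^ (N - 1) := by
  have hlog : log a ≤ log b := log_le_log ha hab
  rcases hN.lt_or_gt with hneg | hpos
  · refine ⟨a, Or.inl rfl, ?_⟩
    have h := integral_log_sub_sq_mul_zpow_sub_eq hN a ha hab
    simp only [sub_self, zero_pow two_ne_zero, zero_div, mul_zero, sub_zero] at h
    have hN' : (N : ℝ) < 0 := Int.cast_lt_zero.2 hneg
    have : b ^ N * ((log b - log a) ^ 2 / N - 2 * (log b - log a) / N ^ 2) ≤ 0 :=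
      mul_nonpos_of_nonneg_of_nonpos (zpow_nonneg (ha.le.trans hab) N)
        (sub_nonpos_of_le ((div_nonpos_of_nonneg_of_nonpos (sq_nonneg _) hN'.le).trans
          (div_nonneg (by linarith) (sq_nonneg _))))
    linarith
  · refine ⟨b, Or.inr rfl, ?_⟩
    have h := integral_log_sub_sq_mul_zpow_sub_eq hN b ha hab
    simp only [sub_self, zero_pow two_ne_zero, zero_div, mul_zero, zero_sub] at h
    have hN' : (0 : ℝ) < N := Int.cast_pos.2 hpos
    have : 0 ≤ a ^ N * ((log a - log b) ^ 2 / N - 2 * (log a - log b) / N ^ 2) :=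
      mul_nonneg (zpow_nonneg ha.le N) (sub_nonneg_of_le ((div_nonpos_of_nonpos_of_nonneg
        (by linarith) (sq_nonneg _)).trans (div_nonneg (sq_nonneg _) hN'.le)))
    linarith

theorem min_sub_le_mul_abs_log_sub {r c : ℝ} (ha : 0 < a) (hr : r ∈ Icc a b)
    (hc : c = a ∨ c = b) : min (r - a) (b - r) ≤ b * |log r - log c| := by
  have hr0 : 0 < r := ha.trans_le hr.1
  rcases hc with rfl | rfl
  · have hlog : log c ≤ log r := log_le_log ha hr.1
    calc min (r - c) (b - r) ≤ r - c := min_le_left _ _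
      _ ≤ r * (log r - log c) := sub_le_mul_log_sub_log ha hr0
      _ ≤ b * |log r - log c| := by
        rw [abs_of_nonneg (sub_nonneg.2 hlog)]
        exact mul_le_mul_of_nonneg_right hr.2 (sub_nonneg.2 hlog)
  · calc min (r - a) (c - r) ≤ c - r := min_le_right _ _
      _ ≤ c * (log c - log r) := sub_le_mul_log_sub_log hr0 (hr0.trans_le hr.2)
      _ ≤ c * |log r - log c| := by
        rw [abs_sub_comm]
        exact mul_le_mul_of_nonneg_left (le_abs_self _) (hr0.le.trans hr.2)

theorem integral_min_sq_mul_zpow_le {n : ℤ} (hn : n ≠ 0) (ha : 0 < a) (hab : a ≤ b) :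
    ∫ r in a..b, min (r - a) (b - r) ^ 2 * r ^ (2 * n + 1) ≤
      2 * b ^ 2 / n ^ 2 * ∫ r in a..b, r ^ (2 * n + 1) := by
  have hmin_nonneg : ∀ r ∈ Icc a b, 0 ≤ min (r - a) (b - r) := fun r hr =>
    le_min (sub_nonneg.2 hr.1) (sub_nonneg.2 hr.2)
  have hzpow_nonneg : ∀ r ∈ Icc a b, 0 ≤ r ^ (2 * n + 1) := fun r hr =>
    zpow_nonneg (ha.le.trans hr.1) _
  have hJ : 0 ≤ ∫ r in a..b, r ^ (2 * n + 1) :=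
    intervalIntegral.integral_nonneg hab hzpow_nonneg
  have hmin_int : IntervalIntegrable (fun r => min (r - a) (b - r) ^ 2 * r ^ (2 * n + 1))
      volume a b := by
    refine ContinuousOn.intervalIntegrable fun r hr => ?_
    rw [uIcc_of_le hab] at hr
    exact ((((continuous_sub_right a).min (continuous_sub_left b)).pow 2).continuousAt.mul
      (continuousAt_zpow₀ r _ (Or.inl (ha.trans_le hr.1).ne'))).continuousWithinAt
  by_cases hn1 : n = -1
  -- here `2 * n + 2 = 0`, but `n ^ 2 = 1` and the trivial bound `min (r - a) (b - r) ≤ b` suffices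
  · subst hn1
    calc ∫ r in a..b, min (r - a) (b - r) ^ 2 * r ^ (2 * -1 + 1 : ℤ)
        ≤ ∫ r in a..b, b ^ 2 * r ^ (2 * -1 + 1 : ℤ) := by
          refine intervalIntegral.integral_mono_on hab hmin_int
            ((intervalIntegrable_zpow_of_pos _ ha hab).const_mul _) fun r hr => ?_
          refine mul_le_mul_of_nonneg_right (pow_le_pow_left₀ (hmin_nonneg r hr) ?_ 2)
            (hzpow_nonneg r hr)
          exact (min_le_right _ _).trans (by linarith [hr.1])
      _ ≤ 2 * b ^ 2 / ((-1 : ℤ) : ℝ) ^ 2 * ∫ r in a..b, r ^ (2 * -1 + 1 : ℤ) := by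
          rw [intervalIntegral.integral_const_mul]
          gcongr
          norm_num
          linarith [sq_nonneg b]
  have hN0 : 2 * n + 2 ≠ 0 := by omega
  have hnN : (n : ℝ) ^ 2 ≤ ((2 * n + 2 : ℤ) : ℝ) ^ 2 := by
    have : n ^ 2 ≤ (2 * n + 2) ^ 2 := by
      rcases (by omega : 0 ≤ n ∨ n ≤ -2) with h | h <;> nlinarith
    exact_mod_cast this
  obtain ⟨c, hc, hlog⟩ := exists_endpoint_integral_log_sub_sq_mul_zpow_le hN0 ha hab
  rw [show 2 * n + 2 - 1 = 2 * n + 1 by omega] at hlog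
  calc ∫ r in a..b, min (r - a) (b - r) ^ 2 * r ^ (2 * n + 1)
      ≤ ∫ r in a..b, b ^ 2 * ((log r - log c) ^ 2 * r ^ (2 * n + 1)) := by
        refine intervalIntegral.integral_mono_on hab hmin_int
          ((intervalIntegrable_log_sub_sq_mul_zpow _ c ha hab).const_mul _) fun r hr => ?_
        rw [← mul_assoc, ← sq_abs (log r - log c), ← mul_pow]
        exact mul_le_mul_of_nonneg_right (pow_le_pow_left₀ (hmin_nonneg r hr)
          (min_sub_le_mul_abs_log_sub ha hr hc) 2) (hzpow_nonneg r hr)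
    _ ≤ b ^ 2 * (2 / ((2 * n + 2 : ℤ) : ℝ) ^ 2 * ∫ r in a..b, r ^ (2 * n + 1)) := by
        rw [intervalIntegral.integral_const_mul]
        gcongr
    _ ≤ 2 * b ^ 2 / n ^ 2 * ∫ r in a..b, r ^ (2 * n + 1) := by
        rw [← mul_assoc, mul_div_assoc', mul_comm (b ^ 2) 2]
        gcongr

end OneVariable

section Annulus

open ENNReal

variable {a b : ℝ}

theorem smul_indicator_Ioo_eq (F : ℝ → ℝ) (y : ℝ) :
    y ^ (Module.finrank ℝ ℂ - 1) • (Ioo a b).indicator F y =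
      (Ioo a b).indicator (fun r => r * F r) y := by
  by_cases hy : y ∈ Ioo a b <;> simp [hy]

theorem integral_indicator_Ioo_norm (F : ℝ → ℝ) (ha : 0 ≤ a) (hab : a ≤ b) :
    ∫ w : ℂ, (Ioo a b).indicator F ‖w‖ =
      2 * volume.real (Metric.ball (0 : ℂ) 1) * ∫ r in a..b, r * F r := by
  simp_rw [integral_fun_norm_addHaar volume ((Ioo a b).indicator F), smul_indicator_Ioo_eq]
  rw [setIntegral_indicator measurableSet_Ioo,
    inter_eq_right.2 fun r (hr : r ∈ Ioo a b) => mem_Ioi.2 (ha.trans_lt hr.1),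
    intervalIntegral.integral_of_le hab, integral_Ioc_eq_integral_Ioo,
    Complex.finrank_real_complex, nsmul_eq_mul, smul_eq_mul]
  push_cast
  ring

theorem integrable_indicator_Ioo_norm {F : ℝ → ℝ} (hF : ContinuousOn F (Icc a b)) :
    Integrable fun w : ℂ => (Ioo a b).indicator F ‖w‖ := by
  rw [integrable_fun_norm_addHaar volume]
  simp_rw [smul_indicator_Ioo_eq]
  refine (integrable_indicator_iff measurableSet_Ioo).2 ?_ |>.integrableOn
  exact ((continuousOn_id.mul hF).integrableOn_Icc).mono_set Ioo_subset_Icc_self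

theorem lintegral_annulus_min_sq_mul_zpow_le {n : ℤ} (hn : n ≠ 0) (ha : 0 < a) (hab : a ≤ b) :
    ∫⁻ w : ℂ, ENNReal.ofReal
        ((Ioo a b).indicator (fun r => min (r - a) (b - r) ^ 2 * r ^ (2 * n)) ‖w‖)
      ≤ ENNReal.ofReal (2 * b ^ 2 / n ^ 2) *
        ∫⁻ w : ℂ, ENNReal.ofReal ((Ioo a b).indicator (fun r => r ^ (2 * n)) ‖w‖) := by
  have hzpow : ContinuousOn (fun r : ℝ => r ^ (2 * n)) (Icc a b) := fun r hr =>
    (continuousAt_zpow₀ r _ (Or.inl (ha.trans_le hr.1).ne')).continuousWithinAt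
  have hmin : ContinuousOn (fun r : ℝ => min (r - a) (b - r) ^ 2 * r ^ (2 * n)) (Icc a b) :=
    (((continuous_sub_right a).min (continuous_sub_left b)).pow 2).continuousOn.mul hzpow
  have hnonneg : ∀ {F : ℝ → ℝ}, (∀ r ∈ Ioo a b, 0 ≤ F r) →
      0 ≤ᵐ[volume] fun w : ℂ => (Ioo a b).indicator F ‖w‖ := fun hF =>
    ae_of_all _ fun w => indicator_nonneg hF _
  have hmul : ∀ r ∈ uIcc a b, r * r ^ (2 * n) = r ^ (2 * n + 1) := fun r hr => by
    rw [uIcc_of_le hab] at hr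
    rw [zpow_add_one₀ (ha.trans_le hr.1).ne', mul_comm]
  have hmul_min : ∫ r in a..b, r * (min (r - a) (b - r) ^ 2 * r ^ (2 * n)) =
      ∫ r in a..b, min (r - a) (b - r) ^ 2 * r ^ (2 * n + 1) :=
    intervalIntegral.integral_congr fun r hr => by rw [mul_left_comm, hmul r hr]
  rw [← ofReal_integral_eq_lintegral_ofReal (integrable_indicator_Ioo_norm hmin)
      (hnonneg fun r hr => mul_nonneg (sq_nonneg _) (zpow_nonneg (ha.trans hr.1).le _)),
    ← ofReal_integral_eq_lintegral_ofReal (integrable_indicator_Ioo_norm hzpow)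
      (hnonneg fun r hr => zpow_nonneg (ha.trans hr.1).le _),
    ← ofReal_mul (by positivity), integral_indicator_Ioo_norm _ ha.le hab,
    integral_indicator_Ioo_norm _ ha.le hab, hmul_min, intervalIntegral.integral_congr hmul]
  refine ofReal_le_ofReal ((mul_le_mul_of_nonneg_left (integral_min_sq_mul_zpow_le hn ha hab)
    (by positivity)).trans_eq (by ring))

end Annulus

section Boundary

open Metric

theorem euclDistToBoundary_eq_infDist (Ω : Set (ℂ × ℂ)) (p : ℂ × ℂ) :
    euclDistToBoundary Ω p = infDist (WithLp.toLp 2 p) (WithLp.toLp 2 '' frontier Ω) := by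
  rw [infDist_eq_iInf, ← sInf_image', image_image, euclDistToBoundary]
  simp only [WithLp.prod_dist_eq_of_L2]
  simp only [dist_eq_norm, WithLp.toLp_fst, WithLp.toLp_snd]

theorem continuous_euclDistToBoundary (Ω : Set (ℂ × ℂ)) : Continuous (euclDistToBoundary Ω) := by
  simp_rw [funext (euclDistToBoundary_eq_infDist Ω)]
  exact (continuous_infDist_pt _).comp (WithLp.prod_continuous_toLp 2 ℂ ℂ)

theorem euclDistToBoundary_nonneg (Ω : Set (ℂ × ℂ)) (p : ℂ × ℂ) :
    0 ≤ euclDistToBoundary Ω p := by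
  rw [euclDistToBoundary_eq_infDist]
  exact infDist_nonneg

theorem euclDistToBoundary_eq_zero_of_mem_frontier {Ω : Set (ℂ × ℂ)} {p : ℂ × ℂ}
    (hp : p ∈ frontier Ω) : euclDistToBoundary Ω p = 0 := by
  rw [euclDistToBoundary_eq_infDist]
  exact infDist_zero_of_mem (mem_image_of_mem _ hp)

theorem euclDistToBoundary_le_norm_sub {Ω : Set (ℂ × ℂ)} {z w w' : ℂ}
    (hq : (z, w') ∈ frontier Ω) : euclDistToBoundary Ω (z, w) ≤ ‖w - w'‖ := by
  rw [euclDistToBoundary_eq_infDist]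
  refine (infDist_le_dist_of_mem (mem_image_of_mem _ hq)).trans_eq ?_
  rw [WithLp.prod_dist_eq_of_L2]
  simp [dist_eq_norm]

end Boundary

def hartogsDomain (D : Set ℂ) (φ₁ φ₂ : ℂ → ℝ) : Set (ℂ × ℂ) :=
  {p | p.1 ∈ D ∧ φ₁ p.1 < ‖p.2‖ ∧ ‖p.2‖ < φ₂ p.1}

section HartogsDomain

variable {D : Set ℂ} {φ₁ φ₂ : ℂ → ℝ} {z w : ℂ}

theorem norm_ofReal_div_norm_mul {t : ℝ} (ht : 0 ≤ t) (hw : w ≠ 0) :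
    ‖((t / ‖w‖ : ℝ) : ℂ) * w‖ = t := by
  rw [norm_mul, Complex.norm_real, Real.norm_of_nonneg (by positivity),
    div_mul_cancel₀ _ (norm_ne_zero_iff.2 hw)]

theorem norm_sub_ofReal_div_norm_mul (t : ℝ) (hw : w ≠ 0) :
    ‖w - ((t / ‖w‖ : ℝ) : ℂ) * w‖ = |‖w‖ - t| := by
  have hw' : ‖w‖ ≠ 0 := norm_ne_zero_iff.2 hw
  calc ‖w - ((t / ‖w‖ : ℝ) : ℂ) * w‖ = ‖((1 - t / ‖w‖ : ℝ) : ℂ) * w‖ := by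
        congr 1
        push_cast
        ring
    _ = |‖w‖ - t| := by
        rw [norm_mul, Complex.norm_real, Real.norm_eq_abs, ← abs_norm w, ← abs_mul, abs_norm,
          sub_mul, one_mul, div_mul_cancel₀ _ hw']

theorem radial_mem_frontier_hartogsDomain (hz : z ∈ D) (h0 : 0 < φ₁ z) (h12 : φ₁ z < φ₂ z)
    (hw : w ≠ 0) {c : ℝ} (hc : c = φ₁ z ∨ c = φ₂ z) :
    (z, ((c / ‖w‖ : ℝ) : ℂ) * w) ∈ frontier (hartogsDomain D φ₁ φ₂) := by
  have hc0 : 0 < c := by rcases hc with rfl | rfl <;> linarith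
  have hγ : Continuous fun t : ℝ => (z, ((t / ‖w‖ : ℝ) : ℂ) * w) := by fun_prop
  refine ⟨map_mem_closure hγ (s := Ioo (φ₁ z) (φ₂ z)) ?_ fun t ht => ?_, fun hint => ?_⟩
  · rw [closure_Ioo h12.ne]
    rcases hc with rfl | rfl <;> simp [h12.le]
  · refine ⟨hz, ?_⟩
    rw [norm_ofReal_div_norm_mul (h0.trans ht.1).le hw]
    exact ht
  · have h := (interior_subset hint).2
    rw [norm_ofReal_div_norm_mul hc0.le hw] at h
    rcases hc with rfl | rfl <;> simp at h

theorem euclDistToBoundary_hartogsDomain_le (h0 : 0 < φ₁ z)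
    (hp : (z, w) ∈ hartogsDomain D φ₁ φ₂) :
    euclDistToBoundary (hartogsDomain D φ₁ φ₂) (z, w) ≤ min (‖w‖ - φ₁ z) (φ₂ z - ‖w‖) := by
  obtain ⟨hz, h1, h2⟩ := hp
  have hw : w ≠ 0 := norm_pos_iff.1 (h0.trans h1)
  have hd := fun c hc => (euclDistToBoundary_le_norm_sub
    (radial_mem_frontier_hartogsDomain hz h0 (h1.trans h2) hw hc)).trans_eq
    (norm_sub_ofReal_div_norm_mul c hw)
  refine le_min ((hd _ (Or.inl rfl)).trans_eq (abs_of_pos (sub_pos.2 h1)))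
    ((hd _ (Or.inr rfl)).trans_eq ?_)
  rw [abs_sub_comm, abs_of_pos (sub_pos.2 h2)]

theorem upper_le_of_forall_mem_hartogsDomain_norm_le {R : ℝ}
    (hR : ∀ p ∈ hartogsDomain D φ₁ φ₂, ‖p‖ ≤ R) (hz : z ∈ D) (h0 : 0 < φ₁ z)
    (h12 : φ₁ z < φ₂ z) : φ₂ z ≤ R := by
  have hIoo : Ioo (φ₁ z) (φ₂ z) ⊆ Iic R := fun t ht => by
    have ht0 : 0 < t := h0.trans ht.1
    have hmem : (z, (t : ℂ)) ∈ hartogsDomain D φ₁ φ₂ :=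
      ⟨hz, by simpa [abs_of_pos ht0] using ht⟩
    simpa [abs_of_pos ht0] using (norm_snd_le _).trans (hR _ hmem)
  refine closure_minimal hIoo isClosed_Iic ?_
  rw [closure_Ioo h12.ne]
  exact right_mem_Icc.2 h12.le

end HartogsDomain

section SetLIntegral

open ENNReal

variable {α β : Type*} [MeasurableSpace α] [MeasurableSpace β]

theorem exists_measurableSet_subset_closure_restrict_eq [TopologicalSpace α]
    [OpensMeasurableSpace α] (μ : Measure α) [SFinite μ] (s : Set α) :
    ∃ t, MeasurableSet t ∧ s ⊆ t ∧ t ⊆ closure s ∧ μ.restrict t = μ.restrict s := by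
  refine ⟨toMeasurable μ s ∩ closure s,
    (measurableSet_toMeasurable μ s).inter isClosed_closure.measurableSet,
    subset_inter (subset_toMeasurable μ s) subset_closure, inter_subset_right, ?_⟩
  refine le_antisymm ?_ (Measure.restrict_mono (subset_inter (subset_toMeasurable μ s)
    subset_closure) le_rfl)
  rw [← Measure.restrict_toMeasurable_of_sFinite s]
  exact Measure.restrict_mono inter_subset_left le_rfl

theorem setLIntegral_eq_lintegral_indicator_of_eq_zero_on_frontier [TopologicalSpace α]
    [OpensMeasurableSpace α] {μ : Measure α} [SFinite μ] {s : Set α} {f : α → ℝ≥0∞}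
    (hf : ∀ x ∈ frontier s, f x = 0) : ∫⁻ x in s, f x ∂μ = ∫⁻ x, s.indicator f x ∂μ := by
  obtain ⟨t, ht, hst, hts, hμ⟩ := exists_measurableSet_subset_closure_restrict_eq μ s
  rw [← hμ, ← lintegral_indicator ht]
  refine lintegral_congr fun x => ?_
  by_cases hxs : x ∈ s
  · rw [indicator_of_mem hxs, indicator_of_mem (hst hxs)]
  by_cases hxt : x ∈ t
  · rw [indicator_of_notMem hxs, indicator_of_mem hxt]
    exact hf x ⟨hts hxt, fun h => hxs (interior_subset h)⟩
  · rw [indicator_of_notMem hxs, indicator_of_notMem hxt]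

theorem setLIntegral_prod_le_of_slices [TopologicalSpace α] [TopologicalSpace β]
    [OpensMeasurableSpace (α × β)] {μ : Measure α} {ν : Measure β} [SFinite μ] [SFinite ν]
    {s : Set (α × β)} {f g : α × β → ℝ≥0∞} {K : ℝ≥0∞} (hg : Measurable g)
    (hf : ∀ p ∈ frontier s, f p = 0)
    (hslice : ∀ x, ∫⁻ y, s.indicator f (x, y) ∂ν ≤ K * ∫⁻ y, s.indicator g (x, y) ∂ν) :
    ∫⁻ p in s, f p ∂μ.prod ν ≤ K * ∫⁻ p in s, g p ∂μ.prod ν := by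
  obtain ⟨t, ht, hst, -, hμ⟩ := exists_measurableSet_subset_closure_restrict_eq (μ.prod ν) s
  have hgt : Measurable (t.indicator g) := hg.indicator ht
  calc ∫⁻ p in s, f p ∂μ.prod ν = ∫⁻ p, s.indicator f p ∂μ.prod ν :=
        setLIntegral_eq_lintegral_indicator_of_eq_zero_on_frontier hf
    _ ≤ ∫⁻ x, ∫⁻ y, s.indicator f (x, y) ∂ν ∂μ := lintegral_prod_le _
    _ ≤ ∫⁻ x, K * ∫⁻ y, t.indicator g (x, y) ∂ν ∂μ := lintegral_mono fun x =>
        (hslice x).trans (mul_le_mul_right (lintegral_mono fun y =>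
          indicator_le_indicator_of_subset hst (fun _ => zero_le) _) K)
    _ = K * ∫⁻ p in s, g p ∂μ.prod ν := by
        rw [lintegral_const_mul _ hgt.lintegral_prod_right', ← lintegral_prod _ hgt.aemeasurable,
          lintegral_indicator ht, hμ]

theorem integral_le_mul_integral_of_lintegral_le {μ : Measure α} {f g : α → ℝ}
    (hf : 0 ≤ᵐ[μ] f) (hfm : AEStronglyMeasurable f μ) (hg : 0 ≤ᵐ[μ] g) (hgi : Integrable g μ)
    {K : ℝ} (hK : 0 ≤ K)
    (h : ∫⁻ x, ENNReal.ofReal (f x) ∂μ ≤ ENNReal.ofReal K * ∫⁻ x, ENNReal.ofReal (g x) ∂μ) :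
    ∫ x, f x ∂μ ≤ K * ∫ x, g x ∂μ := by
  rw [integral_eq_lintegral_of_nonneg_ae hf hfm, integral_eq_lintegral_of_nonneg_ae hg hgi.1,
    ← toReal_ofReal hK, ← toReal_mul]
  exact toReal_mono (mul_ne_top ofReal_ne_top hgi.lintegral_lt_top.ne) h

end SetLIntegral

section Slices

open ENNReal

variable {D : Set ℂ} {φ₁ φ₂ : ℂ → ℝ}

theorem indicator_hartogsDomain_le {n : ℤ} (g : ℂ → ℂ) {z w : ℂ} (h0 : 0 < φ₁ z) :
    (hartogsDomain D φ₁ φ₂).indicator (fun p => ENNReal.ofReal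
        (euclDistToBoundary (hartogsDomain D φ₁ φ₂) p ^ 2 * ‖g p.1‖ ^ 2 * ‖p.2‖ ^ (2 * n))) (z, w)
      ≤ ENNReal.ofReal (‖g z‖ ^ 2) * ENNReal.ofReal ((Ioo (φ₁ z) (φ₂ z)).indicator
        (fun r => min (r - φ₁ z) (φ₂ z - r) ^ 2 * r ^ (2 * n)) ‖w‖) := by
  by_cases hw : (z, w) ∈ hartogsDomain D φ₁ φ₂
  · rw [indicator_of_mem hw, indicator_of_mem (show ‖w‖ ∈ Ioo (φ₁ z) (φ₂ z) from hw.2),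
      ← ofReal_mul (sq_nonneg _)]
    refine ofReal_le_ofReal ?_
    calc euclDistToBoundary (hartogsDomain D φ₁ φ₂) (z, w) ^ 2 * ‖g z‖ ^ 2 * ‖w‖ ^ (2 * n)
        ≤ min (‖w‖ - φ₁ z) (φ₂ z - ‖w‖) ^ 2 * ‖g z‖ ^ 2 * ‖w‖ ^ (2 * n) := by
          gcongr
          · exact euclDistToBoundary_nonneg _ _
          · exact euclDistToBoundary_hartogsDomain_le h0 hw
      _ = _ := by ring
  · simp [indicator_of_notMem hw]

theorem indicator_hartogsDomain_eq {n : ℤ} (g : ℂ → ℂ) {z w : ℂ} (hz : z ∈ D) :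
    (hartogsDomain D φ₁ φ₂).indicator
        (fun p => ENNReal.ofReal (‖g p.1‖ ^ 2 * ‖p.2‖ ^ (2 * n))) (z, w)
      = ENNReal.ofReal (‖g z‖ ^ 2) *
        ENNReal.ofReal ((Ioo (φ₁ z) (φ₂ z)).indicator (fun r => r ^ (2 * n)) ‖w‖) := by
  by_cases hw : (z, w) ∈ hartogsDomain D φ₁ φ₂
  · rw [indicator_of_mem hw, indicator_of_mem (show ‖w‖ ∈ Ioo (φ₁ z) (φ₂ z) from hw.2),
      ← ofReal_mul (sq_nonneg _)]
  · have hwA : ‖w‖ ∉ Ioo (φ₁ z) (φ₂ z) := fun h => hw ⟨hz, h⟩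
    simp [indicator_of_notMem hw, indicator_of_notMem hwA]

theorem lintegral_slice_hartogsDomain_le (hφ : ∀ z ∈ D, 0 < φ₁ z ∧ φ₁ z < φ₂ z) {R : ℝ}
    (hR : ∀ z ∈ D, φ₂ z ≤ R) {n : ℤ} (hn : n ≠ 0) (g : ℂ → ℂ) (z : ℂ) :
    ∫⁻ w, (hartogsDomain D φ₁ φ₂).indicator (fun p => ENNReal.ofReal
        (euclDistToBoundary (hartogsDomain D φ₁ φ₂) p ^ 2 * ‖g p.1‖ ^ 2 * ‖p.2‖ ^ (2 * n))) (z, w)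
      ≤ ENNReal.ofReal (2 * R ^ 2 / (n : ℝ) ^ 2) * ∫⁻ w, (hartogsDomain D φ₁ φ₂).indicator
        (fun p => ENNReal.ofReal (‖g p.1‖ ^ 2 * ‖p.2‖ ^ (2 * n))) (z, w) := by
  by_cases hz : z ∈ D
  swap
  · simp [indicator_of_notMem (fun h : (z, _) ∈ hartogsDomain D φ₁ φ₂ => hz h.1)]
  obtain ⟨h0, h12⟩ := hφ z hz
  have hG : ENNReal.ofReal (‖g z‖ ^ 2) ≠ ∞ := ofReal_ne_top
  calc _ ≤ ∫⁻ w, ENNReal.ofReal (‖g z‖ ^ 2) * ENNReal.ofReal ((Ioo (φ₁ z) (φ₂ z)).indicator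
          (fun r => min (r - φ₁ z) (φ₂ z - r) ^ 2 * r ^ (2 * n)) ‖w‖) :=
        lintegral_mono fun w => indicator_hartogsDomain_le g h0
    _ ≤ ENNReal.ofReal (‖g z‖ ^ 2) * (ENNReal.ofReal (2 * φ₂ z ^ 2 / (n : ℝ) ^ 2) *
          ∫⁻ w, ENNReal.ofReal ((Ioo (φ₁ z) (φ₂ z)).indicator (fun r => r ^ (2 * n)) ‖w‖)) := by
        rw [lintegral_const_mul' _ _ hG]
        exact mul_le_mul_right (lintegral_annulus_min_sq_mul_zpow_le hn h0 h12.le) _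
    _ ≤ _ := by
        simp_rw [indicator_hartogsDomain_eq g hz, lintegral_const_mul' _ _ hG,
          mul_left_comm (ENNReal.ofReal (‖g z‖ ^ 2))]
        gcongr
        · exact (h0.trans h12).le
        · exact hR z hz

end Slices

theorem hartogs_distance_weighted_integral_bound_general (D : Set ℂ)
    (φ₁ φ₂ : ℂ → ℝ) (hφ : ∀ z ∈ D, 0 < φ₁ z ∧ φ₁ z < φ₂ z)
    (hbd : Bornology.IsBounded
      {p : ℂ × ℂ | p.1 ∈ D ∧ φ₁ p.1 < ‖p.2‖ ∧ ‖p.2‖ < φ₂ p.1}) :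
    ∃ C > (0 : ℝ), ∀ n : ℤ, n ≠ 0 → ∀ g : ℂ → ℂ, Measurable g →
      Integrable (fun p : ℂ × ℂ => ‖g p.1‖ ^ 2 * ‖p.2‖ ^ (2 * n))
        (volume.restrict
          {p : ℂ × ℂ | p.1 ∈ D ∧ φ₁ p.1 < ‖p.2‖ ∧ ‖p.2‖ < φ₂ p.1}) →
      (∫ p in {p : ℂ × ℂ | p.1 ∈ D ∧ φ₁ p.1 < ‖p.2‖ ∧ ‖p.2‖ < φ₂ p.1},
          (euclDistToBoundary
              {p : ℂ × ℂ | p.1 ∈ D ∧ φ₁ p.1 < ‖p.2‖ ∧ ‖p.2‖ < φ₂ p.1} p) ^ 2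
            * ‖g p.1‖ ^ 2 * ‖p.2‖ ^ (2 * n)) ≤
        (C / (n : ℝ) ^ 2) *
          ∫ p in {p : ℂ × ℂ | p.1 ∈ D ∧ φ₁ p.1 < ‖p.2‖ ∧ ‖p.2‖ < φ₂ p.1},
            ‖g p.1‖ ^ 2 * ‖p.2‖ ^ (2 * n) := by
  set Ω := {p : ℂ × ℂ | p.1 ∈ D ∧ φ₁ p.1 < ‖p.2‖ ∧ ‖p.2‖ < φ₂ p.1}
  obtain ⟨R, hR0, hR⟩ := hbd.exists_pos_norm_le
  refine ⟨2 * R ^ 2, by positivity, fun n hn g hg hint => ?_⟩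
  have hd_cont := continuous_euclDistToBoundary Ω
  have hmeas : Measurable fun p : ℂ × ℂ => ‖g p.1‖ ^ 2 * ‖p.2‖ ^ (2 * n) := by fun_prop
  have hmeas_d : Measurable fun p =>
      euclDistToBoundary Ω p ^ 2 * ‖g p.1‖ ^ 2 * ‖p.2‖ ^ (2 * n) := by
    fun_prop
  refine integral_le_mul_integral_of_lintegral_le (ae_of_all _ fun p => by positivity)
    hmeas_d.aestronglyMeasurable (ae_of_all _ fun p => by positivity) hint (by positivity) ?_
  rw [Measure.volume_eq_prod]
  refine setLIntegral_prod_le_of_slices hmeas.ennreal_ofReal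
    (fun p hp => by simp [euclDistToBoundary_eq_zero_of_mem_frontier hp]) fun z => ?_
  exact lintegral_slice_hartogsDomain_le hφ
    (fun z hz => upper_le_of_forall_mem_hartogsDomain_norm_le hR hz (hφ z hz).1 (hφ z hz).2) hn g z

/-- On a bounded Hartogs domain
`Ω = {(z,w) : z ∈ D, φ₁(z) < |w| < φ₂(z)}` there is `C > 0` such that for every nonzero
integer `n` and measurable `g`,
`∫_Ω d_Ω² |g(z)|² |w|^{2n} dV ≤ (C/n²) ∫_Ω |g(z)|² |w|^{2n} dV`
whenever the right-hand side is finite. -/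
theorem hartogs_distance_weighted_integral_bound (D : Set ℂ) (hD : IsOpen D)
    (hDne : D.Nonempty) (φ₁ φ₂ : ℂ → ℝ) (hφ : ∀ z ∈ D, 0 < φ₁ z ∧ φ₁ z < φ₂ z)
    (hbd : Bornology.IsBounded
      {p : ℂ × ℂ | p.1 ∈ D ∧ φ₁ p.1 < ‖p.2‖ ∧ ‖p.2‖ < φ₂ p.1}) :
    ∃ C > (0 : ℝ), ∀ n : ℤ, n ≠ 0 → ∀ g : ℂ → ℂ, Measurable g →
      Integrable (fun p : ℂ × ℂ => ‖g p.1‖ ^ 2 * ‖p.2‖ ^ (2 * n))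
        (volume.restrict
          {p : ℂ × ℂ | p.1 ∈ D ∧ φ₁ p.1 < ‖p.2‖ ∧ ‖p.2‖ < φ₂ p.1}) →
      (∫ p in {p : ℂ × ℂ | p.1 ∈ D ∧ φ₁ p.1 < ‖p.2‖ ∧ ‖p.2‖ < φ₂ p.1},
          (euclDistToBoundary
              {p : ℂ × ℂ | p.1 ∈ D ∧ φ₁ p.1 < ‖p.2‖ ∧ ‖p.2‖ < φ₂ p.1} p) ^ 2
            * ‖g p.1‖ ^ 2 * ‖p.2‖ ^ (2 * n)) ≤
        (C / (n : ℝ) ^ 2) *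
          ∫ p in {p : ℂ × ℂ | p.1 ∈ D ∧ φ₁ p.1 < ‖p.2‖ ∧ ‖p.2‖ < φ₂ p.1},
            ‖g p.1‖ ^ 2 * ‖p.2‖ ^ (2 * n) :=
  hartogs_distance_weighted_integral_bound_general D φ₁ φ₂ hφ hbd
end

section
/- Let H₁, H₂, H₃, H₄ be Hilbert spaces, let A : H₁ → H₂ and T : H₁ → H₃ be bounded linear operators, and let K : H₁ → H₄ be a compact linear operator. Suppose that for every ε > 0 there exists a constant C_ε > 0 such that ‖A h‖² ≤ ε ‖T h‖ ‖h‖ + C_ε ‖K h‖ ‖h‖ for all h ∈ H₁. Then A is compact. -/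
open Metric Set

/-- If `A : H₁ → H₂`, `T : H₁ → H₃` are bounded operators between Hilbert
spaces, `K : H₁ → H₄` is a compact operator, and for every `ε > 0` there is `C_ε > 0` with
`‖A h‖² ≤ ε ‖T h‖ ‖h‖ + C_ε ‖K h‖ ‖h‖` for all `h`, then `A` is compact. -/
theorem compact_of_compactness_estimate {H₁ H₂ H₃ H₄ : Type*}
    [NormedAddCommGroup H₁] [InnerProductSpace ℂ H₁] [CompleteSpace H₁]
    [NormedAddCommGroup H₂] [InnerProductSpace ℂ H₂] [CompleteSpace H₂]
    [NormedAddCommGroup H₃] [InnerProductSpace ℂ H₃] [CompleteSpace H₃]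
    [NormedAddCommGroup H₄] [InnerProductSpace ℂ H₄] [CompleteSpace H₄]
    (A : H₁ →L[ℂ] H₂) (T : H₁ →L[ℂ] H₃) (K : H₁ →L[ℂ] H₄)
    (hK : IsCompactOperator K)
    (hest : ∀ ε > (0 : ℝ), ∃ C > (0 : ℝ), ∀ h : H₁,
      ‖A h‖ ^ 2 ≤ ε * ‖T h‖ * ‖h‖ + C * ‖K h‖ * ‖h‖) :
    IsCompactOperator A := by
  suffices htb : TotallyBounded (A '' Metric.closedBall 0 1) by
    change IsCompactOperator (A : H₁ →ₛₗ[RingHom.id ℂ] H₂)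
    rw [isCompactOperator_iff_isCompact_closure_image_closedBall
      (A : H₁ →ₛₗ[RingHom.id ℂ] H₂) zero_lt_one]
    exact TotallyBounded.isCompact_of_isClosed htb.closure isClosed_closure
  rw [Metric.totallyBounded_iff]
  intro δ hδ
  set ε := δ ^ 2 / (16 * ‖T‖ + 16) with hεdef
  have hεpos : 0 < ε := by positivity
  obtain ⟨C, hC, hest'⟩ := hest ε hεpos
  set r := δ ^ 2 / (8 * C) with hrdef
  have hrpos : 0 < r := by positivity
  have hKtb : TotallyBounded (K '' Metric.closedBall 0 1) :=
    (hK.isCompact_closure_image_closedBall (𝕜₁ := ℂ) 1).totallyBounded.subset subset_closure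
  obtain ⟨t, ht, hcov⟩ := Metric.totallyBounded_iff.mp hKtb r hrpos
  classical
  -- key estimate: close under K implies close under A
  have key : ∀ x ∈ Metric.closedBall (0 : H₁) 1, ∀ x' ∈ Metric.closedBall (0 : H₁) 1,
      ‖K x - K x'‖ < 2 * r → ‖A x - A x'‖ < δ := by
    intro x hx x' hx' hKxx'
    rw [Metric.mem_closedBall, dist_zero_right] at hx hx'
    have hsub : ‖x - x'‖ ≤ 2 := by
      calc ‖x - x'‖ ≤ ‖x‖ + ‖x'‖ := norm_sub_le _ _
        _ ≤ 2 := by linarith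
    have h1 : ‖A (x - x')‖ ^ 2 ≤ ε * ‖T (x - x')‖ * ‖x - x'‖ + C * ‖K (x - x')‖ * ‖x - x'‖ :=
      hest' _
    have hT : ‖T (x - x')‖ ≤ ‖T‖ * 2 := by
      calc ‖T (x - x')‖ ≤ ‖T‖ * ‖x - x'‖ := T.le_opNorm _
        _ ≤ ‖T‖ * 2 := by nlinarith [norm_nonneg T]
    have hKd : ‖K (x - x')‖ < 2 * r := by rw [map_sub]; exact hKxx'
    have e1 : ε * ‖T (x - x')‖ * ‖x - x'‖ ≤ ε * (‖T‖ * 2) * 2 := by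
      gcongr
    have e2 : C * ‖K (x - x')‖ * ‖x - x'‖ ≤ C * (2 * r) * 2 := by
      gcongr
    have h2 : ‖A (x - x')‖ ^ 2 ≤ ε * (‖T‖ * 2) * 2 + C * (2 * r) * 2 := by linarith
    have hε1 : ε * (‖T‖ * 2) * 2 ≤ δ ^ 2 / 4 := by
      rw [hεdef]
      rw [div_mul_eq_mul_div, div_mul_eq_mul_div, div_le_div_iff₀ (by positivity) (by norm_num)]
      nlinarith [norm_nonneg T, sq_nonneg δ]
    have hr1 : C * (2 * r) * 2 = δ ^ 2 / 2 := by
      rw [hrdef]; field_simp; ring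
    have h3 : ‖A (x - x')‖ ^ 2 < δ ^ 2 := by nlinarith
    have : ‖A (x - x')‖ < δ := lt_of_pow_lt_pow_left₀ 2 (le_of_lt hδ) h3
    rwa [map_sub] at this
  -- choose representatives
  have hrep : ∀ y ∈ t, (∃ x ∈ Metric.closedBall (0 : H₁) 1, K x ∈ Metric.ball y r) →
      ∃ x ∈ Metric.closedBall (0 : H₁) 1, K x ∈ Metric.ball y r := fun _ _ h => h
  let g : H₄ → H₁ := fun y =>
    if h : ∃ x ∈ Metric.closedBall (0 : H₁) 1, K x ∈ Metric.ball y r then h.choose else 0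
  refine ⟨A '' (g '' t), (ht.image g).image A, ?_⟩
  rintro _ ⟨x, hx, rfl⟩
  have hKx : K x ∈ ⋃ y ∈ t, Metric.ball y r := hcov ⟨x, hx, rfl⟩
  rw [mem_iUnion₂] at hKx
  obtain ⟨y, hy, hKxy⟩ := hKx
  have hex : ∃ x ∈ Metric.closedBall (0 : H₁) 1, K x ∈ Metric.ball y r := ⟨x, hx, hKxy⟩
  have hgy : g y = hex.choose := by simp only [g, dif_pos hex]
  obtain ⟨hmem, hball⟩ := hex.choose_spec
  rw [mem_iUnion₂]
  refine ⟨A (g y), mem_image_of_mem A (mem_image_of_mem g hy), ?_⟩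
  rw [Metric.mem_ball, dist_eq_norm]
  apply key x hx (g y) (hgy ▸ hmem)
  rw [hgy]
  calc ‖K x - K hex.choose‖ ≤ ‖K x - y‖ + ‖y - K hex.choose‖ := norm_sub_le_norm_sub_add_norm_sub _ _ _
    _ < r + r := by
        apply add_lt_add
        · rwa [← dist_eq_norm, ← Metric.mem_ball]
        · rw [norm_sub_rev]; rwa [← dist_eq_norm, ← Metric.mem_ball]
    _ = 2 * r := by ring
end

section
/- Let V ⊆ ℂ ≅ ℝ² be an open set, let u, v : V → ℝ be C² functions with Δu ≤ 0 on V (u superharmonic), Δv ≥ 0 on V (v subharmonic), and u(z) > v(z) for all z ∈ V, and let t > 0 and s > 0 be real constants. Then the function z ↦ −log( s (e^{t u(z)} − e^{t v(z)}) ) is C² on V and satisfies Δ( −log( s (e^{tu} − e^{tv}) ) ) ≥ 0 on V, i.e., it is subharmonic. -/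
/-- The Laplacian `Δf = ∂²f/∂x² + ∂²f/∂y²` of `f : ℂ → ℝ`, expressed via the second
(iterated Fréchet) derivative in the directions `1` and `i`. -/
noncomputable def lap (f : ℂ → ℝ) (z : ℂ) : ℝ :=
  iteratedFDeriv ℝ 2 f z ![1, 1] + iteratedFDeriv ℝ 2 f z ![Complex.I, Complex.I]

/-! Since `e^{tu} - e^{tv} = e^{tv} (e^{t(u-v)} - 1)`, the function is `-log s - t v + ψ (u - v)`
with `ψ y = -log (e^{ty} - 1)`. The chain rule `Δ(ψ ∘ w) = ψ''(w) |∇w|² + ψ'(w) Δw` and the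
convexity of `ψ` give `Δ(ψ ∘ (u - v)) ≥ ψ'(u - v) (Δu - Δv)`; as `ψ' = -t - t / (e^{ty} - 1)`,
the Laplacian of the whole function is at least `ψ'(u - v) Δu + t / (e^{t(u-v)} - 1) Δv ≥ 0`. -/

open Real Filter Topology InnerProductSpace Laplacian

section SecondDerivative

variable {𝕜 E F G : Type*} [NontriviallyNormedField 𝕜]
  [NormedAddCommGroup E] [NormedSpace 𝕜 E] [NormedAddCommGroup F] [NormedSpace 𝕜 F]
  [NormedAddCommGroup G] [NormedSpace 𝕜 G]

theorem fderiv_fderiv_comp_apply {g : F → G} {f : E → F} {x : E}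
    (hg : ContDiffAt 𝕜 2 g (f x)) (hf : ContDiffAt 𝕜 2 f x) (a b : E) :
    fderiv 𝕜 (fderiv 𝕜 (g ∘ f)) x a b =
      fderiv 𝕜 (fderiv 𝕜 g) (f x) (fderiv 𝕜 f x a) (fderiv 𝕜 f x b) +
      fderiv 𝕜 g (f x) (fderiv 𝕜 (fderiv 𝕜 f) x a b) := by
  have hf_near : ∀ᶠ y in 𝓝 x, DifferentiableAt 𝕜 f y :=
    (hf.eventually (by simp)).mono fun y hy ↦ hy.differentiableAt (by simp)
  have hg_near : ∀ᶠ y in 𝓝 x, DifferentiableAt 𝕜 g (f y) :=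
    hf.continuousAt.eventually
      ((hg.eventually (by simp)).mono fun y hy ↦ hy.differentiableAt (by simp))
  have hchain : fderiv 𝕜 (g ∘ f) =ᶠ[𝓝 x] fun y ↦ (fderiv 𝕜 g (f y)).comp (fderiv 𝕜 f y) :=
    (hf_near.and hg_near).mono fun y ⟨hfy, hgy⟩ ↦ fderiv_comp y hgy hfy
  have hDg : HasFDerivAt (fun y ↦ fderiv 𝕜 g (f y))
      ((fderiv 𝕜 (fderiv 𝕜 g) (f x)).comp (fderiv 𝕜 f x)) x :=
    ((hg.fderiv_right (m := 1) le_rfl).differentiableAt one_ne_zero).hasFDerivAt.comp x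
      (hf.differentiableAt (by simp)).hasFDerivAt
  have hDf : HasFDerivAt (fderiv 𝕜 f) (fderiv 𝕜 (fderiv 𝕜 f) x) x :=
    ((hf.fderiv_right (m := 1) le_rfl).differentiableAt one_ne_zero).hasFDerivAt
  rw [((hDg.clm_comp hDf).congr_of_eventuallyEq hchain).fderiv]
  simp [add_comm]

end SecondDerivative

theorem fderiv_fderiv_apply_real (φ : ℝ → ℝ) (y c d : ℝ) :
    fderiv ℝ (fderiv ℝ φ) y c d = c * d * deriv (deriv φ) y := by
  have h := iteratedFDeriv_apply_eq_iteratedDeriv_mul_prod (f := φ) (x := y) (m := ![c, d])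
  rw [iteratedFDeriv_two_apply, iteratedDeriv_succ, iteratedDeriv_one] at h
  simpa using h

theorem laplacian_comp_apply {E : Type*} [NormedAddCommGroup E] [InnerProductSpace ℝ E]
    [FiniteDimensional ℝ E] {ι : Type*} [Fintype ι] (w : OrthonormalBasis ι ℝ E)
    {φ : ℝ → ℝ} {f : E → ℝ} {x : E} (hφ : ContDiffAt ℝ 2 φ (f x)) (hf : ContDiffAt ℝ 2 f x) :
    Δ (φ ∘ f) x =
      deriv (deriv φ) (f x) * ∑ i, fderiv ℝ f x (w i) ^ 2 + deriv φ (f x) * Δ f x := by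
  simp only [laplacian_eq_iteratedFDeriv_orthonormalBasis _ w, iteratedFDeriv_two_apply,
    Matrix.cons_val_zero, Matrix.cons_val_one, fderiv_fderiv_comp_apply hφ hf,
    fderiv_fderiv_apply_real]
  simp only [fderiv_eq_smul_deriv, smul_eq_mul, Finset.sum_add_distrib, Finset.mul_sum]
  congr 1 <;> refine Finset.sum_congr rfl fun i _ ↦ by ring

theorem deriv_mul_laplacian_le_laplacian_comp {E : Type*} [NormedAddCommGroup E]
    [InnerProductSpace ℝ E] [FiniteDimensional ℝ E] {φ : ℝ → ℝ} {f : E → ℝ} {x : E}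
    (hφ : ContDiffAt ℝ 2 φ (f x)) (hf : ContDiffAt ℝ 2 f x) (hφ'' : 0 ≤ deriv (deriv φ) (f x)) :
    deriv φ (f x) * Δ f x ≤ Δ (φ ∘ f) x := by
  rw [laplacian_comp_apply (stdOrthonormalBasis ℝ E) hφ hf]
  have hsq : 0 ≤ ∑ i, fderiv ℝ f x (stdOrthonormalBasis ℝ E i) ^ 2 :=
    Finset.sum_nonneg fun i _ ↦ sq_nonneg _
  nlinarith [mul_nonneg hφ'' hsq]

section NegLogExpSubOne

variable {t x : ℝ}

theorem hasDerivAt_exp_mul_sub_one (t x : ℝ) :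
    HasDerivAt (fun y ↦ exp (t * y) - 1) (exp (t * x) * t) x := by
  simpa using (((hasDerivAt_id x).const_mul t).exp).sub_const 1

theorem contDiffAt_neg_log_exp_mul_sub_one (h : 0 < t * x) :
    ContDiffAt ℝ 2 (fun y ↦ -log (exp (t * y) - 1)) x := by
  have hpos : 0 < exp (t * x) - 1 := sub_pos.2 (one_lt_exp_iff.2 h)
  fun_prop (disch := exact hpos.ne')

theorem hasDerivAt_neg_log_exp_mul_sub_one (h : 0 < t * x) :
    HasDerivAt (fun y ↦ -log (exp (t * y) - 1)) (-t - t / (exp (t * x) - 1)) x := by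
  have hpos : 0 < exp (t * x) - 1 := sub_pos.2 (one_lt_exp_iff.2 h)
  refine ((hasDerivAt_exp_mul_sub_one t x).log hpos.ne').neg.congr_deriv ?_
  field_simp
  ring

theorem deriv_deriv_neg_log_exp_mul_sub_one (h : 0 < t * x) :
    deriv (deriv fun y ↦ -log (exp (t * y) - 1)) x =
      t ^ 2 * exp (t * x) / (exp (t * x) - 1) ^ 2 := by
  have hpos : 0 < exp (t * x) - 1 := sub_pos.2 (one_lt_exp_iff.2 h)
  have hderiv : deriv (fun y ↦ -log (exp (t * y) - 1)) =ᶠ[𝓝 x]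
      fun y ↦ -t - t / (exp (t * y) - 1) :=
    eventually_of_mem ((isOpen_lt continuous_const (continuous_const_mul t)).mem_nhds h)
      fun y hy ↦ (hasDerivAt_neg_log_exp_mul_sub_one hy).deriv
  rw [hderiv.deriv_eq]
  refine ((((hasDerivAt_const x t).div (hasDerivAt_exp_mul_sub_one t x) hpos.ne').const_sub
    (-t)).congr_deriv ?_).deriv
  field_simp
  ring

end NegLogExpSubOne

theorem neg_log_mul_exp_sub_exp {s t a b : ℝ} (hs : 0 < s) (hab : t * b < t * a) :
    -log (s * (exp (t * a) - exp (t * b))) = -log s - t * b + -log (exp (t * (a - b)) - 1) := by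
  have hpos : 0 < exp (t * (a - b)) - 1 := sub_pos.2 (one_lt_exp_iff.2 (by linarith))
  have hfac : exp (t * a) - exp (t * b) = exp (t * b) * (exp (t * (a - b)) - 1) := by
    rw [mul_sub, ← exp_add]; ring_nf
  rw [hfac, log_mul hs.ne' (by positivity), log_mul (by positivity) hpos.ne', log_exp]
  ring

theorem laplacian_neg_log_mul_exp_sub_exp_nonneg {E : Type*} [NormedAddCommGroup E]
    [InnerProductSpace ℝ E] [FiniteDimensional ℝ E] {u v : E → ℝ} {x : E} {s t : ℝ}
    (hu : ContDiffAt ℝ 2 u x) (hv : ContDiffAt ℝ 2 v x) (hΔu : Δ u x ≤ 0) (hΔv : 0 ≤ Δ v x)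
    (huv : v x < u x) (ht : 0 < t) (hs : 0 < s) :
    0 ≤ Δ (fun y ↦ -log (s * (exp (t * u y) - exp (t * v y)))) x := by
  set ψ : ℝ → ℝ := fun y ↦ -log (exp (t * y) - 1)
  have hx : 0 < t * (u - v) x := mul_pos ht (sub_pos.2 huv)
  have hgap : ∀ᶠ y in 𝓝 x, t * v y < t * u y :=
    ((hv.continuousAt.const_mul t).eventually_lt (hu.continuousAt.const_mul t)
      (mul_lt_mul_of_pos_left huv ht))
  have hF : (fun y ↦ -log (s * (exp (t * u y) - exp (t * v y)))) =ᶠ[𝓝 x]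
      (fun _ ↦ -log s) - t • v + ψ ∘ (u - v) :=
    hgap.mono fun y hy ↦ neg_log_mul_exp_sub_exp hs hy
  have hψ : ContDiffAt ℝ 2 ψ ((u - v) x) := contDiffAt_neg_log_exp_mul_sub_one hx
  have hc : ContDiffAt ℝ 2 (fun _ ↦ -log s) x := contDiffAt_const
  have htv : ContDiffAt ℝ 2 (t • v) x := hv.const_smul t
  have hctv : ContDiffAt ℝ 2 ((fun _ ↦ -log s) - t • v) x := hc.sub htv
  have huv' : ContDiffAt ℝ 2 (u - v) x := hu.sub hv
  have hconvex := deriv_mul_laplacian_le_laplacian_comp hψ huv'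
    (by rw [deriv_deriv_neg_log_exp_mul_sub_one hx]; positivity)
  rw [(hasDerivAt_neg_log_exp_mul_sub_one hx).deriv, hu.laplacian_sub hv] at hconvex
  rw [(laplacian_congr_nhds hF).eq_of_nhds, hctv.laplacian_add (hψ.comp x huv'),
    hc.laplacian_sub htv, laplacian_const, laplacian_smul _ hv, Pi.zero_apply, smul_eq_mul]
  have hq : 0 ≤ t / (exp (t * (u - v) x) - 1) :=
    div_nonneg ht.le (sub_pos.2 (one_lt_exp_iff.2 hx)).le
  nlinarith [mul_nonneg hq hΔv, mul_nonneg ht.le (neg_nonneg.2 hΔu),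
    mul_nonneg hq (neg_nonneg.2 hΔu)]

theorem lap_eq_laplacian (f : ℂ → ℝ) : lap f = Δ f := by
  rw [laplacian_eq_iteratedFDeriv_complexPlane]
  rfl

/-- If `u` is C² superharmonic, `v` is C² subharmonic on an open set `V`,
`u > v` on `V`, and `t, s > 0`, then `z ↦ -log(s (e^{tu(z)} - e^{tv(z)}))` is C² and
subharmonic on `V`. -/
theorem neg_log_diff_exp_subharmonic (V : Set ℂ) (hV : IsOpen V) (u v : ℂ → ℝ)
    (hu : ContDiffOn ℝ 2 u V) (hv : ContDiffOn ℝ 2 v V)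
    (hu_super : ∀ z ∈ V, lap u z ≤ 0) (hv_sub : ∀ z ∈ V, 0 ≤ lap v z)
    (huv : ∀ z ∈ V, v z < u z) (t s : ℝ) (ht : 0 < t) (hs : 0 < s) :
    ContDiffOn ℝ 2 (fun z => -Real.log (s * (Real.exp (t * u z) - Real.exp (t * v z)))) V ∧
    ∀ z ∈ V, 0 ≤ lap (fun z => -Real.log (s * (Real.exp (t * u z) - Real.exp (t * v z)))) z := by
  refine ⟨fun z hz ↦ ?_, fun z hz ↦ ?_⟩
  · have hcu := hu.contDiffAt (hV.mem_nhds hz)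
    have hcv := hv.contDiffAt (hV.mem_nhds hz)
    have hne : s * (exp (t * u z) - exp (t * v z)) ≠ 0 :=
      (mul_pos hs (sub_pos.2 (exp_lt_exp.2 (mul_lt_mul_of_pos_left (huv z hz) ht)))).ne'
    exact ContDiffAt.contDiffWithinAt (by fun_prop (disch := exact hne))
  · simp only [lap_eq_laplacian] at hu_super hv_sub ⊢
    exact laplacian_neg_log_mul_exp_sub_exp_nonneg (hu.contDiffAt (hV.mem_nhds hz))
      (hv.contDiffAt (hV.mem_nhds hz)) (hu_super z hz) (hv_sub z hz) (huv z hz) ht hs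
end

section
/- Let V₁ ⊆ ℂ be an open set, let φ, α : V₁ → ℝ be C² functions with Δφ ≥ 0 (φ subharmonic), Δα ≤ 0 (α superharmonic), and φ(z) < α(z) for all z ∈ V₁. For each integer n ≥ 0 define λ_n(z) = −log( (π/(n+1)) (e^{−(2n+2)φ(z)} − e^{−(2n+2)α(z)}) ). Then λ_n is C² and Δλ_n ≥ 0 on V₁, i.e., λ_n is subharmonic on V₁. -/
open Filter Topology

theorem iteratedFDeriv_two_comp_apply_self {E : Type*} [NormedAddCommGroup E] [NormedSpace ℝ E]
    {f : E → ℝ} {g g' : ℝ → ℝ} {g'' : ℝ} {x : E} (hf : ContDiffAt ℝ 2 f x)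
    (hg : ∀ᶠ y in 𝓝 (f x), HasDerivAt g (g' y) y) (hg' : HasDerivAt g' g'' (f x)) (v : E) :
    iteratedFDeriv ℝ 2 (g ∘ f) x ![v, v] =
      g'' * fderiv ℝ f x v ^ 2 + g' (f x) * iteratedFDeriv ℝ 2 f x ![v, v] := by
  have hdf : DifferentiableAt ℝ (fderiv ℝ f) x :=
    (hf.fderiv_right (m := 1) (by norm_num)).differentiableAt one_ne_zero
  have hfderiv : fderiv ℝ (g ∘ f) =ᶠ[𝓝 x] fun w => g' (f w) • fderiv ℝ f w := by
    filter_upwards [hf.eventually (by simp), hf.continuousAt.tendsto.eventually hg]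
      with w hfw hgw
    exact (hgw.comp_hasFDerivAt w (hfw.differentiableAt two_ne_zero).hasFDerivAt).fderiv
  have hsecond : HasFDerivAt (fun w => g' (f w) • fderiv ℝ f w)
      (g' (f x) • fderiv ℝ (fderiv ℝ f) x + (g'' • fderiv ℝ f x).smulRight (fderiv ℝ f x)) x :=
    (hg'.comp_hasFDerivAt x (hf.differentiableAt two_ne_zero).hasFDerivAt).smul hdf.hasFDerivAt
  simp only [iteratedFDeriv_two_apply, hfderiv.fderiv_eq, hsecond.fderiv, Fin.isValue,
    Matrix.cons_val_zero, Matrix.cons_val_one, Matrix.cons_val_fin_one, add_apply, smul_apply,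
    ContinuousLinearMap.smulRight_apply, smul_eq_mul]
  ring

noncomputable def gradNormSq (f : ℂ → ℝ) (z : ℂ) : ℝ :=
  fderiv ℝ f z 1 ^ 2 + fderiv ℝ f z Complex.I ^ 2

theorem lap_comp {f : ℂ → ℝ} {g g' : ℝ → ℝ} {g'' : ℝ} {z : ℂ} (hf : ContDiffAt ℝ 2 f z)
    (hg : ∀ᶠ y in 𝓝 (f z), HasDerivAt g (g' y) y) (hg' : HasDerivAt g' g'' (f z)) :
    lap (g ∘ f) z = g'' * gradNormSq f z + g' (f z) * lap f z := by
  simp only [lap, gradNormSq, iteratedFDeriv_two_comp_apply_self hf hg hg']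
  ring

theorem lap_sub {f g : ℂ → ℝ} {z : ℂ} (hf : ContDiffAt ℝ 2 f z) (hg : ContDiffAt ℝ 2 g z) :
    lap (f - g) z = lap f z - lap g z := by
  simp only [lap, iteratedFDeriv_sub_apply hf hg, sub_apply]
  ring

theorem hasDerivAt_exp_neg_mul (k x : ℝ) :
    HasDerivAt (fun x => Real.exp (-k * x)) (-k * Real.exp (-k * x)) x := by
  simpa [mul_comm] using ((hasDerivAt_id x).const_mul (-k)).exp

theorem hasDerivAt_neg_mul_exp_neg_mul (k x : ℝ) :
    HasDerivAt (fun x => -k * Real.exp (-k * x)) (k ^ 2 * Real.exp (-k * x)) x :=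
  ((hasDerivAt_exp_neg_mul k x).const_mul (-k)).congr_deriv (by ring)

theorem hasDerivAt_neg_log_const_mul {c x : ℝ} (hc : c ≠ 0) (hx : x ≠ 0) :
    HasDerivAt (fun x => -Real.log (c * x)) (-x⁻¹) x :=
  (((hasDerivAt_id' x).const_mul c).log (mul_ne_zero hc hx)).neg.congr_deriv (by field_simp)

theorem fderiv_exp_neg_mul_comp {f : ℂ → ℝ} {z : ℂ} (k : ℝ) (hf : DifferentiableAt ℝ f z) :
    fderiv ℝ (fun w => Real.exp (-k * f w)) z = (-k * Real.exp (-k * f z)) • fderiv ℝ f z :=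
  ((hasDerivAt_exp_neg_mul k (f z)).comp_hasFDerivAt z hf.hasFDerivAt).fderiv

theorem lap_exp_neg_mul_comp {f : ℂ → ℝ} {z : ℂ} (k : ℝ) (hf : ContDiffAt ℝ 2 f z) :
    lap (fun w => Real.exp (-k * f w)) z =
      k ^ 2 * Real.exp (-k * f z) * gradNormSq f z - k * Real.exp (-k * f z) * lap f z := by
  rw [show (fun w => Real.exp (-k * f w)) = (fun x => Real.exp (-k * x)) ∘ f from rfl,
    lap_comp hf (.of_forall (hasDerivAt_exp_neg_mul k)) (hasDerivAt_neg_mul_exp_neg_mul k (f z))]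
  ring

theorem exp_neg_mul_sub_exp_neg_mul_pos {k x y : ℝ} (hk : 0 < k) (hxy : x < y) :
    0 < Real.exp (-k * x) - Real.exp (-k * y) := by
  rw [sub_pos, Real.exp_lt_exp]
  nlinarith

theorem lap_neg_log_mul_exp_sub_exp_nonneg {φ α : ℂ → ℝ} {z : ℂ} {k c : ℝ} (hk : 0 < k)
    (hc : c ≠ 0) (hφ : ContDiffAt ℝ 2 φ z) (hα : ContDiffAt ℝ 2 α z) (hφ_sub : 0 ≤ lap φ z)
    (hα_super : lap α z ≤ 0) (hφα : φ z < α z) :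
    0 ≤ lap (fun w => -Real.log (c * (Real.exp (-k * φ w) - Real.exp (-k * α w)))) z := by
  set u : ℂ → ℝ := fun w => Real.exp (-k * φ w) - Real.exp (-k * α w) with hu_def
  have hu_pos : 0 < u z := exp_neg_mul_sub_exp_neg_mul_pos hk hφα
  have he₁ : ContDiffAt ℝ 2 (fun w => Real.exp (-k * φ w)) z := (contDiffAt_const.mul hφ).exp
  have he₂ : ContDiffAt ℝ 2 (fun w => Real.exp (-k * α w)) z := (contDiffAt_const.mul hα).exp
  have hlap_u : lap u z =
      lap (fun w => Real.exp (-k * φ w)) z - lap (fun w => Real.exp (-k * α w)) z :=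
    lap_sub he₁ he₂
  have hfderiv_u : fderiv ℝ u z =
      (-k * Real.exp (-k * φ z)) • fderiv ℝ φ z - (-k * Real.exp (-k * α z)) • fderiv ℝ α z := by
    rw [hu_def, fderiv_fun_sub (he₁.differentiableAt two_ne_zero)
      (he₂.differentiableAt two_ne_zero),
      fderiv_exp_neg_mul_comp k (hφ.differentiableAt two_ne_zero),
      fderiv_exp_neg_mul_comp k (hα.differentiableAt two_ne_zero)]
  have hlap : lap ((fun x => -Real.log (c * x)) ∘ u) z =
      (u z ^ 2)⁻¹ * gradNormSq u z + -(u z)⁻¹ * lap u z :=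
    lap_comp (he₁.sub he₂)
      ((isOpen_ne.eventually_mem hu_pos.ne').mono fun y hy => hasDerivAt_neg_log_const_mul hc hy)
      ((hasDerivAt_inv hu_pos.ne').fun_neg.congr_deriv (neg_neg _))
  change 0 ≤ lap ((fun x => -Real.log (c * x)) ∘ u) z
  rw [hlap, hlap_u, lap_exp_neg_mul_comp k hφ, lap_exp_neg_mul_comp k hα, gradNormSq, hfderiv_u]
  set a := Real.exp (-k * φ z)
  set b := Real.exp (-k * α z)
  have ha : 0 < a := Real.exp_pos _
  have hb : 0 < b := Real.exp_pos _
  have hu_eq : u z = a - b := rfl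
  simp only [gradNormSq, hu_eq, sub_apply, smul_apply, smul_eq_mul]
  rw [hu_eq] at hu_pos
  set p₁ := fderiv ℝ φ z 1
  set p₂ := fderiv ℝ φ z Complex.I
  set q₁ := fderiv ℝ α z 1
  set q₂ := fderiv ℝ α z Complex.I
  have hnum : 0 ≤ k ^ 2 * a * b * ((p₁ - q₁) ^ 2 + (p₂ - q₂) ^ 2)
      + k * (a - b) * (a * lap φ z - b * lap α z) :=
    add_nonneg (by positivity) (mul_nonneg (by positivity) (by nlinarith))
  refine (div_nonneg hnum (sq_nonneg (a - b))).trans_eq ?_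
  field_simp
  ring

/-- If `φ` is C² subharmonic, `α` is C² superharmonic on an open set
`V₁` with `φ < α`, then for every integer `n ≥ 0` the function
`λ_n(z) = -log((π/(n+1)) (e^{-(2n+2)φ(z)} - e^{-(2n+2)α(z)}))` is C² and subharmonic on `V₁`. -/
theorem lambda_n_subharmonic' (V₁ : Set ℂ) (hV₁ : IsOpen V₁) (φ α : ℂ → ℝ)
    (hφ : ContDiffOn ℝ 2 φ V₁) (hα : ContDiffOn ℝ 2 α V₁)
    (hφ_sub : ∀ z ∈ V₁, 0 ≤ lap φ z) (hα_super : ∀ z ∈ V₁, lap α z ≤ 0)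
    (hφα : ∀ z ∈ V₁, φ z < α z) (n : ℕ) :
    ContDiffOn ℝ 2
      (fun z => -Real.log (Real.pi / ((n : ℝ) + 1) *
        (Real.exp (-(2 * (n : ℝ) + 2) * φ z) - Real.exp (-(2 * (n : ℝ) + 2) * α z)))) V₁ ∧
    ∀ z ∈ V₁,
      0 ≤ lap (fun z => -Real.log (Real.pi / ((n : ℝ) + 1) *
        (Real.exp (-(2 * (n : ℝ) + 2) * φ z) - Real.exp (-(2 * (n : ℝ) + 2) * α z)))) z := by
  have hk : (0 : ℝ) < 2 * n + 2 := by positivity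
  have hc : Real.pi / (n + 1) ≠ 0 := by positivity
  refine ⟨?_, fun z hz => lap_neg_log_mul_exp_sub_exp_nonneg hk hc
    (hφ.contDiffAt (hV₁.mem_nhds hz)) (hα.contDiffAt (hV₁.mem_nhds hz)) (hφ_sub z hz)
    (hα_super z hz) (hφα z hz)⟩
  have hcu : ContDiffOn ℝ 2 (fun z => Real.pi / (n + 1) *
      (Real.exp (-(2 * n + 2) * φ z) - Real.exp (-(2 * n + 2) * α z))) V₁ :=
    contDiffOn_const.mul ((contDiffOn_const.mul hφ).exp.sub (contDiffOn_const.mul hα).exp)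
  exact (hcu.log fun z hz =>
    mul_ne_zero hc (exp_neg_mul_sub_exp_neg_mul_pos hk (hφα z hz)).ne').neg
end
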